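/- arXiv:1905.01554 — 2 statements merged into one kernel-verified Lean document; each statement's English description precedes it below -/
import Mathlib

section
/- Let σ = (σ_1,…,σ_n) be uniformly distributed on {−1,+1}^n (i.e. σ_1,…,σ_n are i.i.d. Rademacher), and let 0 ≤ c < 1/2. Then E[ exp( (c/n)·(Σ_{i=1}^n σ_i)² ) ] → 1/√(1 − 2c) as n → ∞. -/
open MeasureTheory Filter Finset Topology

noncomputable section

/-- The spin value of a Boolean. -/
def spin (b : Bool) : ℝ := if b then 1 else -1

lemma aux_integrable (s : ℝ) :
    Integrable (fun x : ℝ => Real.exp (-x ^ 2 / 2 + s * x)) := by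
  have h : ∀ x : ℝ, -x ^ 2 / 2 + s * x = s ^ 2 / 2 + -(1/2 : ℝ) * (x - s) ^ 2 := by
    intro x; ring
  simp_rw [h, Real.exp_add]
  exact (((integrable_exp_neg_mul_sq (by norm_num : (0:ℝ) < 1/2)).comp_sub_right s)).const_mul _

lemma aux_integral (s : ℝ) :
    ∫ x : ℝ, Real.exp (-x ^ 2 / 2 + s * x)
      = Real.sqrt (2 * Real.pi) * Real.exp (s ^ 2 / 2) := by
  have h : ∀ x : ℝ, Real.exp (-x ^ 2 / 2 + s * x)
      = Real.exp (s ^ 2 / 2) * Real.exp (-(1/2 : ℝ) * (x - s) ^ 2) := by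
    intro x; rw [← Real.exp_add]; ring_nf
  simp_rw [h]
  rw [integral_const_mul,
    integral_sub_right_eq_self (fun x : ℝ => Real.exp (-(1/2 : ℝ) * x ^ 2)) s,
    integral_gaussian]
  rw [mul_comm]
  norm_num
  exact mul_comm _ _

lemma aux_key (c : ℝ) (hc0 : 0 ≤ c) (n : ℕ) (hn : n ≠ 0) :
    ((2 : ℝ) ^ n)⁻¹ *
        ∑ σ : Fin n → Bool, Real.exp ((c / n) * (∑ i : Fin n, spin (σ i)) ^ 2)
      = (Real.sqrt (2 * Real.pi))⁻¹ *
        ∫ x : ℝ, Real.exp (-x ^ 2 / 2) * Real.cosh (Real.sqrt (2 * c / n) * x) ^ n := by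
  have hn' : (0:ℝ) < n := by positivity
  set a : ℝ := Real.sqrt (2 * c / n) with ha
  have ha2 : a ^ 2 = 2 * c / n := Real.sq_sqrt (by positivity)
  -- step 1: rewrite each exponent via the Gaussian identity
  have h1 : ∀ σ : Fin n → Bool,
      Real.exp ((c / n) * (∑ i : Fin n, spin (σ i)) ^ 2)
        = (Real.sqrt (2 * Real.pi))⁻¹ *
          ∫ x : ℝ, Real.exp (-x ^ 2 / 2 + (a * ∑ i : Fin n, spin (σ i)) * x) := by
    intro σ
    rw [aux_integral]
    have : (a * ∑ i : Fin n, spin (σ i)) ^ 2 / 2 = (c / n) * (∑ i : Fin n, spin (σ i)) ^ 2 := by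
      rw [mul_pow, ha2]; field_simp
    rw [this, ← mul_assoc, inv_mul_cancel₀ (by positivity), one_mul]
  have h4 : ∀ x : ℝ,
      (∑ σ : Fin n → Bool, Real.exp (-x ^ 2 / 2 + (a * ∑ i : Fin n, spin (σ i)) * x))
        = (2:ℝ) ^ n * (Real.exp (-x ^ 2 / 2) * Real.cosh (a * x) ^ n) := by
    intro x
    have h2 : ∀ σ : Fin n → Bool,
        Real.exp (-x ^ 2 / 2 + (a * ∑ i : Fin n, spin (σ i)) * x)
          = Real.exp (-x ^ 2 / 2) * ∏ i : Fin n, Real.exp (a * x * spin (σ i)) := by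
      intro σ
      rw [← Real.exp_sum, ← Real.exp_add]
      congr 1
      rw [Finset.mul_sum, Finset.sum_mul]
      congr 1
      exact Finset.sum_congr rfl fun i _ => by ring
    simp_rw [h2, ← Finset.mul_sum]
    rw [← Fintype.prod_sum (fun (_ : Fin n) (b : Bool) => Real.exp (a * x * spin b))]
    have h3 : (∑ b : Bool, Real.exp (a * x * spin b)) = 2 * Real.cosh (a * x) := by
      rw [Real.cosh_eq]
      simp [spin, Fintype.sum_bool]
      ring
    simp only [h3]
    rw [Finset.prod_const, Finset.card_univ, Fintype.card_fin, mul_pow]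
    ring
  simp_rw [h1, ← Finset.mul_sum]
  rw [← integral_finset_sum _ (fun σ _ => aux_integrable _)]
  simp_rw [h4]
  rw [integral_const_mul, mul_left_comm (((2:ℝ)^n)⁻¹), ← mul_assoc (((2:ℝ)^n)⁻¹),
    inv_mul_cancel₀ (by positivity : ((2:ℝ)^n) ≠ 0), one_mul]


lemma aux_cosh_lb (t : ℝ) : 1 + t ^ 2 / 2 ≤ Real.cosh t := by
  have h := Real.hasSum_cosh t
  have h2 := sum_le_hasSum (Finset.range 2)
    (fun i _ => by
      have : (0:ℝ) ≤ t ^ (2 * i) := by rw [pow_mul]; positivity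
      positivity) h
  simpa [Finset.sum_range_succ, Nat.factorial] using h2

lemma aux_upper (c : ℝ) (hc0 : 0 ≤ c) {n : ℕ} (hn : n ≠ 0) (x : ℝ) :
    Real.cosh (Real.sqrt (2 * c / n) * x) ^ n ≤ Real.exp (c * x ^ 2) := by
  have hn' : (0:ℝ) < n := by positivity
  have ht : (Real.sqrt (2 * c / n) * x) ^ 2 = 2 * c / n * x ^ 2 := by
    rw [mul_pow, Real.sq_sqrt (by positivity)]
  calc Real.cosh (Real.sqrt (2 * c / n) * x) ^ n
      ≤ Real.exp ((Real.sqrt (2 * c / n) * x) ^ 2 / 2) ^ n :=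
        pow_le_pow_left₀ (Real.cosh_pos _).le (Real.cosh_le_exp_half_sq _) n
    _ = Real.exp (n * ((Real.sqrt (2 * c / n) * x) ^ 2 / 2)) := by
        rw [← Real.exp_nat_mul]
    _ = Real.exp (c * x ^ 2) := by
        rw [ht]; congr 1; field_simp

lemma aux_pointwise (c : ℝ) (hc0 : 0 ≤ c) (x : ℝ) :
    Tendsto (fun n : ℕ => Real.cosh (Real.sqrt (2 * c / n) * x) ^ n) atTop
      (𝓝 (Real.exp (c * x ^ 2))) := by
  have hlow := Real.tendsto_one_add_div_pow_exp (c * x ^ 2)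
  refine tendsto_of_tendsto_of_tendsto_of_le_of_le' hlow tendsto_const_nhds ?_ ?_
  · filter_upwards [eventually_ge_atTop 1] with n hn
    have hn' : (0:ℝ) < n := by positivity
    apply pow_le_pow_left₀ (by positivity)
    have ht : (Real.sqrt (2 * c / n) * x) ^ 2 = 2 * c / n * x ^ 2 := by
      rw [mul_pow, Real.sq_sqrt (by positivity)]
    have : 1 + c * x ^ 2 / n = 1 + (Real.sqrt (2 * c / n) * x) ^ 2 / 2 := by
      rw [ht]; ring
    rw [this]
    exact aux_cosh_lb _
  · filter_upwards [eventually_ge_atTop 1] with n hn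
    exact aux_upper c hc0 (by omega) x

lemma aux_dct (c : ℝ) (hc0 : 0 ≤ c) (hc : c < 1 / 2) :
    Tendsto (fun n : ℕ => ∫ x : ℝ,
        Real.exp (-x ^ 2 / 2) * Real.cosh (Real.sqrt (2 * c / n) * x) ^ n) atTop
      (𝓝 (∫ x : ℝ, Real.exp (-x ^ 2 / 2) * Real.exp (c * x ^ 2))) := by
  have hb : (0:ℝ) < 1 / 2 - c := by linarith
  have hbd : ∀ x : ℝ, Real.exp (-x ^ 2 / 2) * Real.exp (c * x ^ 2)
      = Real.exp (-(1 / 2 - c) * x ^ 2) := by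
    intro x; rw [← Real.exp_add]; ring_nf
  apply tendsto_integral_filter_of_dominated_convergence
    (fun x => Real.exp (-x ^ 2 / 2) * Real.exp (c * x ^ 2))
  · filter_upwards with n
    exact (Continuous.aestronglyMeasurable (by fun_prop))
  · filter_upwards [eventually_ge_atTop 1] with n hn
    filter_upwards with x
    rw [Real.norm_eq_abs, abs_of_nonneg (by positivity)]
    exact mul_le_mul_of_nonneg_left (aux_upper c hc0 (by omega) x) (Real.exp_pos _).le
  · exact (Integrable.congr (integrable_exp_neg_mul_sq hb) (by
      filter_upwards with x; rw [hbd x]))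
  · filter_upwards with x
    exact tendsto_const_nhds.mul (aux_pointwise c hc0 x)

lemma aux_final (c : ℝ) (hc0 : 0 ≤ c) (hc : c < 1 / 2) :
    (Real.sqrt (2 * Real.pi))⁻¹ * ∫ x : ℝ, Real.exp (-x ^ 2 / 2) * Real.exp (c * x ^ 2)
      = 1 / Real.sqrt (1 - 2 * c) := by
  have hb : (0:ℝ) < 1 / 2 - c := by linarith
  have hbd : ∀ x : ℝ, Real.exp (-x ^ 2 / 2) * Real.exp (c * x ^ 2)
      = Real.exp (-(1 / 2 - c) * x ^ 2) := by
    intro x; rw [← Real.exp_add]; ring_nf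
  simp_rw [hbd]
  rw [integral_gaussian]
  have h1 : (0:ℝ) < 1 - 2 * c := by linarith
  have hpi := Real.pi_pos
  rw [eq_div_iff (ne_of_gt (Real.sqrt_pos.mpr h1)), mul_assoc,
    ← Real.sqrt_mul (by positivity)]
  have h2 : Real.pi / (1 / 2 - c) * (1 - 2 * c) = 2 * Real.pi := by
    field_simp
  rw [h2, inv_mul_cancel₀ (ne_of_gt (Real.sqrt_pos.mpr (by positivity)))]


/-- **Curie–Weiss partition function limit.**
For i.i.d. Rademacher spins `σ_1, …, σ_n` and `0 ≤ c < 1/2`,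
`E[exp((c/n)(Σ_i σ_i)²)] → 1/√(1 − 2c)`. -/
theorem curieWeiss_partition_limit (c : ℝ) (hc0 : 0 ≤ c) (hc : c < 1 / 2) :
    Tendsto
      (fun n : ℕ =>
        ((2 : ℝ) ^ n)⁻¹ *
          ∑ σ : Fin n → Bool, Real.exp ((c / n) * (∑ i : Fin n, spin (σ i)) ^ 2))
      atTop (𝓝 (1 / Real.sqrt (1 - 2 * c))) := by
  rw [← aux_final c hc0 hc]
  refine Tendsto.congr' ?_ ((aux_dct c hc0 hc).const_mul ((Real.sqrt (2 * Real.pi))⁻¹))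
  filter_upwards [eventually_ge_atTop 1] with n hn
  exact (aux_key c hc0 n (by omega)).symm

end
end

section
/- Fix β with 0 < β < 1/2 and J ≥ 0 with βJ < 1/2. Let σ and σ' be independent, each uniformly distributed on {−1,+1}^n, let δ_n → 0 with √n·δ_n → ∞, and set Ω_n := { τ ∈ {−1,+1}^n : |Σ_{i=1}^n τ_i| ≤ n δ_n }. Then there exists η > 0 such that limsup_{n→∞} E[ 1_{σ ∈ Ω_n} · 1_{σ' ∈ Ω_n} · exp{ (1+η)·( (2β²/n)(Σ_{i=1}^n σ_i σ'_i)² + (βJ/n)(Σ_{i=1}^n σ_i)² + (βJ/n)(Σ_{i=1}^n σ'_i)² ) } ] < ∞. -/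
open MeasureTheory Filter Finset Topology

noncomputable section

lemma ite_nonneg' (P : Prop) [Decidable P] : (0:ℝ) ≤ if P then 1 else 0 := by
  split_ifs <;> norm_num

lemma ind_prod_le (a b X S : ℝ) :
    (if a ≤ |X| then (1:ℝ) else 0) * (if b ≤ |S| then (1:ℝ) else 0)
      ≤ (if a ≤ 1*X ∧ b ≤ 1*S then (1:ℝ) else 0) + (if a ≤ 1*X ∧ b ≤ (-1)*S then (1:ℝ) else 0)
        + (if a ≤ (-1)*X ∧ b ≤ 1*S then (1:ℝ) else 0)
        + (if a ≤ (-1)*X ∧ b ≤ (-1)*S then (1:ℝ) else 0) := by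
  have h1 := ite_nonneg' (a ≤ 1*X ∧ b ≤ 1*S)
  have h2 := ite_nonneg' (a ≤ 1*X ∧ b ≤ (-1)*S)
  have h3 := ite_nonneg' (a ≤ (-1)*X ∧ b ≤ 1*S)
  have h4 := ite_nonneg' (a ≤ (-1)*X ∧ b ≤ (-1)*S)
  by_cases hx : a ≤ |X|
  · by_cases hy : b ≤ |S|
    · rw [if_pos hx, if_pos hy, one_mul]
      rcases le_abs.mp hx with h | h <;> rcases le_abs.mp hy with h' | h'
      · rw [if_pos ⟨by linarith, by linarith⟩]; linarith
      · rw [if_pos (show a ≤ 1*X ∧ b ≤ (-1)*S from ⟨by linarith, by linarith⟩)]; linarith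
      · rw [if_pos (show a ≤ (-1)*X ∧ b ≤ 1*S from ⟨by linarith, by linarith⟩)]; linarith
      · rw [if_pos (show a ≤ (-1)*X ∧ b ≤ (-1)*S from ⟨by linarith, by linarith⟩)]; linarith
    · rw [if_neg hy, mul_zero]; linarith
  · rw [if_neg hx, zero_mul]; linarith

lemma spin_cases (b : Bool) : spin b = 1 ∨ spin b = -1 := by
  cases b <;> simp [spin]

lemma spin_sq (b : Bool) : spin b ^ 2 = 1 := by cases b <;> norm_num [spin]

lemma sum_exp_eq_prod (n : ℕ) (c : Fin n → ℝ) :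
    ∑ σ : Fin n → Bool, Real.exp (∑ i, c i * spin (σ i))
      = ∏ i : Fin n, (Real.exp (c i) + Real.exp (-c i)) := by
  have : ∀ i : Fin n, Real.exp (c i) + Real.exp (-c i) = ∑ b : Bool, Real.exp (c i * spin b) := by
    intro i
    rw [Fintype.sum_bool]
    simp [spin]
  simp_rw [this, Fintype.prod_sum (fun i b => Real.exp (c i * spin b))]
  congr 1; funext σ; rw [Real.exp_sum]

lemma mgf_le (n : ℕ) (c : Fin n → ℝ) :
    ∑ σ : Fin n → Bool, Real.exp (∑ i, c i * spin (σ i))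
      ≤ 2 ^ n * Real.exp (∑ i, c i ^ 2 / 2) := by
  rw [sum_exp_eq_prod, Real.exp_sum, ← Fin.prod_const n (2:ℝ), ← Finset.prod_mul_distrib]
  refine Finset.prod_le_prod (fun i _ => by positivity) (fun i _ => ?_)
  have := Real.cosh_le_exp_half_sq (c i)
  rw [Real.cosh_eq] at this
  linarith

lemma chernoff2 (n : ℕ) (ε : Fin n → ℝ) (hε : ∀ i, ε i ^ 2 = 1) (t u a b D : ℝ)
    (ht : 0 ≤ t) (hu : 0 ≤ u) (s₁ s₂ : ℝ) (hs₁ : s₁ ^ 2 = 1) (hs₂ : s₂ ^ 2 = 1)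
    (hD : s₁ * s₂ * ∑ i, ε i ≤ D) :
    ∑ σ : Fin n → Bool,
      (if a ≤ s₁ * ∑ i, ε i * spin (σ i) ∧ b ≤ s₂ * ∑ i, spin (σ i) then (1:ℝ) else 0)
    ≤ 2 ^ n * Real.exp (- (t*a) - u*b + n*(t^2+u^2)/2 + t*u*D) := by
  set c : Fin n → ℝ := fun i => t * s₁ * ε i + u * s₂ with hc
  have step1 : ∀ σ : Fin n → Bool,
      (if a ≤ s₁ * ∑ i, ε i * spin (σ i) ∧ b ≤ s₂ * ∑ i, spin (σ i) then (1:ℝ) else 0)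
        ≤ Real.exp (- (t*a) - u*b) * Real.exp (∑ i, c i * spin (σ i)) := by
    intro σ
    rw [← Real.exp_add]
    split_ifs with h
    · have hX : t * a ≤ t * (s₁ * ∑ i, ε i * spin (σ i)) := mul_le_mul_of_nonneg_left h.1 ht
      have hS : u * b ≤ u * (s₂ * ∑ i, spin (σ i)) := mul_le_mul_of_nonneg_left h.2 hu
      have hsum : ∑ i, c i * spin (σ i)
          = t * (s₁ * ∑ i, ε i * spin (σ i)) + u * (s₂ * ∑ i, spin (σ i)) := by
        simp only [hc, add_mul, Finset.sum_add_distrib, Finset.mul_sum]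
        congr 1
        · congr 1; funext i; ring
        · congr 1; funext i; ring
      rw [Real.one_le_exp_iff, hsum]; linarith
    · positivity
  calc ∑ σ : Fin n → Bool,
      (if a ≤ s₁ * ∑ i, ε i * spin (σ i) ∧ b ≤ s₂ * ∑ i, spin (σ i) then (1:ℝ) else 0)
      ≤ ∑ σ : Fin n → Bool, Real.exp (- (t*a) - u*b) * Real.exp (∑ i, c i * spin (σ i)) :=
        Finset.sum_le_sum fun σ _ => step1 σ
    _ = Real.exp (- (t*a) - u*b) * ∑ σ : Fin n → Bool, Real.exp (∑ i, c i * spin (σ i)) := by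
        rw [Finset.mul_sum]
    _ ≤ Real.exp (- (t*a) - u*b) * (2 ^ n * Real.exp (∑ i, c i ^ 2 / 2)) := by
        exact mul_le_mul_of_nonneg_left (mgf_le n c) (Real.exp_pos _).le
    _ ≤ 2 ^ n * Real.exp (- (t*a) - u*b + n*(t^2+u^2)/2 + t*u*D) := by
        rw [Real.exp_add, Real.exp_add, ← mul_assoc, mul_comm (Real.exp (-(t*a) - u*b)) ((2:ℝ)^n),
          mul_assoc, mul_assoc]
        refine mul_le_mul_of_nonneg_left (mul_le_mul_of_nonneg_left ?_ (Real.exp_pos _).le)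
          (by positivity)
        rw [← Real.exp_add, Real.exp_le_exp]
        have hsum : ∑ i, c i ^ 2 / 2 = n*(t^2+u^2)/2 + t*u*(s₁*s₂*∑ i, ε i) := by
          simp only [hc]
          have : ∀ i, (t * s₁ * ε i + u * s₂) ^ 2 / 2
              = (t^2*(ε i ^2 * s₁^2) + u^2*s₂^2)/2 + t*u*(s₁*s₂*ε i) := by intro i; ring
          simp_rw [this, hε, hs₁, hs₂, Finset.sum_add_distrib, ← Finset.mul_sum]
          simp [Finset.sum_const, Finset.card_univ]
          ring
        rw [hsum]
        have : t*u*(s₁*s₂*∑ i, ε i) ≤ t*u*D := mul_le_mul_of_nonneg_left hD (by positivity)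
        linarith

lemma chernoff1 (n : ℕ) (u b : ℝ) (hu : 0 ≤ u) (s₂ : ℝ) (hs₂ : s₂ ^ 2 = 1) :
    ∑ σ : Fin n → Bool, (if b ≤ s₂ * ∑ i, spin (σ i) then (1:ℝ) else 0)
      ≤ 2 ^ n * Real.exp (- (u*b) + n*u^2/2) := by
  set c : Fin n → ℝ := fun _ => u * s₂ with hc
  have step1 : ∀ σ : Fin n → Bool,
      (if b ≤ s₂ * ∑ i, spin (σ i) then (1:ℝ) else 0)
        ≤ Real.exp (- (u*b)) * Real.exp (∑ i, c i * spin (σ i)) := by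
    intro σ
    rw [← Real.exp_add]
    split_ifs with h
    · have hS : u * b ≤ u * (s₂ * ∑ i, spin (σ i)) := mul_le_mul_of_nonneg_left h hu
      have hsum : ∑ i, c i * spin (σ i) = u * (s₂ * ∑ i, spin (σ i)) := by
        simp only [hc, Finset.mul_sum]
        congr 1; funext i; ring
      rw [Real.one_le_exp_iff, hsum]; linarith
    · positivity
  calc ∑ σ : Fin n → Bool, (if b ≤ s₂ * ∑ i, spin (σ i) then (1:ℝ) else 0)
      ≤ ∑ σ : Fin n → Bool, Real.exp (- (u*b)) * Real.exp (∑ i, c i * spin (σ i)) :=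
        Finset.sum_le_sum fun σ _ => step1 σ
    _ = Real.exp (- (u*b)) * ∑ σ : Fin n → Bool, Real.exp (∑ i, c i * spin (σ i)) := by
        rw [Finset.mul_sum]
    _ ≤ Real.exp (- (u*b)) * (2 ^ n * Real.exp (∑ i, c i ^ 2 / 2)) :=
        mul_le_mul_of_nonneg_left (mgf_le n c) (Real.exp_pos _).le
    _ = 2 ^ n * Real.exp (- (u*b) + n*u^2/2) := by
        have : ∑ i : Fin n, c i ^ 2 / 2 = n*u^2/2 := by
          simp only [hc]
          rw [Finset.sum_const, Finset.card_univ, Fintype.card_fin]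
          rw [nsmul_eq_mul, mul_pow, hs₂]
          ring
        rw [this, Real.exp_add]; ring

lemma ind1_le (b S : ℝ) :
    (if b ≤ |S| then (1:ℝ) else 0)
      ≤ (if b ≤ 1*S then (1:ℝ) else 0) + (if b ≤ (-1)*S then (1:ℝ) else 0) := by
  have h1 := ite_nonneg' (b ≤ 1*S)
  have h2 := ite_nonneg' (b ≤ (-1)*S)
  by_cases hx : b ≤ |S|
  · rw [if_pos hx]
    rcases le_abs.mp hx with h | h
    · rw [if_pos (show b ≤ 1*S by linarith)]; linarith
    · rw [if_pos (show b ≤ (-1)*S by linarith)]; linarith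
  · rw [if_neg hx]; linarith

lemma tail1 (n : ℕ) (hn : 1 ≤ n) (k : ℕ) :
    ∑ σ : Fin n → Bool, (if (k:ℝ) * Real.sqrt n ≤ |∑ i, spin (σ i)| then (1:ℝ) else 0)
      ≤ 2 ^ n * (2 * Real.exp (-(k:ℝ)^2/2)) := by
  have hn0 : (0:ℝ) < n := by exact_mod_cast hn
  set s := Real.sqrt n with hsdef
  have hs0 : 0 < s := Real.sqrt_pos.mpr hn0
  have hss : s * s = (n:ℝ) := by rw [hsdef]; exact Real.mul_self_sqrt hn0.le
  set u : ℝ := k / s with hudef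
  have hu : 0 ≤ u := by positivity
  have key : - (u*((k:ℝ)*s)) + n*u^2/2 = -(k:ℝ)^2/2 := by
    rw [hudef, div_pow]
    rw [show s^2 = (n:ℝ) by rw [pow_two, hss]]
    field_simp
    ring
  have combo : ∀ s₂ : ℝ, s₂^2 = 1 →
      ∑ σ : Fin n → Bool, (if (k:ℝ)*s ≤ s₂ * ∑ i, spin (σ i) then (1:ℝ) else 0)
        ≤ 2 ^ n * Real.exp (-(k:ℝ)^2/2) := by
    intro s₂ hs₂
    calc _ ≤ 2 ^ n * Real.exp (- (u*((k:ℝ)*s)) + n*u^2/2) := chernoff1 n u ((k:ℝ)*s) hu s₂ hs₂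
      _ = _ := by rw [key]
  calc ∑ σ : Fin n → Bool, (if (k:ℝ) * s ≤ |∑ i, spin (σ i)| then (1:ℝ) else 0)
      ≤ ∑ σ : Fin n → Bool,
          ((if (k:ℝ)*s ≤ 1 * ∑ i, spin (σ i) then (1:ℝ) else 0)
            + (if (k:ℝ)*s ≤ (-1) * ∑ i, spin (σ i) then (1:ℝ) else 0)) :=
        Finset.sum_le_sum fun σ _ => ind1_le _ _
    _ = (∑ σ : Fin n → Bool, (if (k:ℝ)*s ≤ 1 * ∑ i, spin (σ i) then (1:ℝ) else 0))
        + (∑ σ : Fin n → Bool, (if (k:ℝ)*s ≤ (-1) * ∑ i, spin (σ i) then (1:ℝ) else 0)) :=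
        Finset.sum_add_distrib
    _ ≤ 2 ^ n * Real.exp (-(k:ℝ)^2/2) + 2 ^ n * Real.exp (-(k:ℝ)^2/2) := by
        gcongr <;> [exact combo 1 (by norm_num); exact combo (-1) (by norm_num)]
    _ = 2 ^ n * (2 * Real.exp (-(k:ℝ)^2/2)) := by ring

lemma peel (n : ℕ) (hn : 1 ≤ n) (x : ℝ) (hx : |x| ≤ n) (θ' θ : ℝ) (h0 : 0 ≤ θ') (h1 : θ' ≤ θ) :
    Real.exp (θ' * x^2 / n)
      ≤ ∑ j ∈ Finset.range (n+1),
          Real.exp (θ*((j:ℝ)+1)^2) * (if (j:ℝ) * Real.sqrt n ≤ |x| then (1:ℝ) else 0) := by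
  have hn0 : (0:ℝ) < n := by exact_mod_cast hn
  set s := Real.sqrt n with hsdef
  have hs0 : 0 < s := Real.sqrt_pos.mpr hn0
  have hss : s * s = (n:ℝ) := by rw [hsdef]; exact Real.mul_self_sqrt hn0.le
  have hs1 : 1 ≤ s := by
    rw [hsdef]; rw [show (1:ℝ) = Real.sqrt 1 by simp]
    exact Real.sqrt_le_sqrt (by exact_mod_cast hn)
  set j₀ : ℕ := ⌊|x| / s⌋₊ with hj₀
  have hxs : |x| / s ≤ n := by
    rw [div_le_iff₀ hs0]
    calc |x| ≤ (n:ℝ) := hx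
      _ ≤ n * s := le_mul_of_one_le_right hn0.le hs1
  have hmem : j₀ ∈ Finset.range (n+1) := by
    rw [Finset.mem_range, Nat.lt_succ_iff]
    exact_mod_cast Nat.floor_le_floor hxs |>.trans (by simp)
  have hind : (j₀:ℝ) * s ≤ |x| := by
    rw [← le_div_iff₀ hs0]
    exact Nat.floor_le (by positivity)
  have hterm : Real.exp (θ' * x^2 / n)
      ≤ Real.exp (θ*((j₀:ℝ)+1)^2) * (if (j₀:ℝ) * s ≤ |x| then (1:ℝ) else 0) := by
    rw [if_pos hind, mul_one, Real.exp_le_exp]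
    have hθ : 0 ≤ θ := le_trans h0 h1
    have hx2 : x^2 / n ≤ ((j₀:ℝ)+1)^2 := by
      have h2 : |x| / s < (j₀:ℝ) + 1 := Nat.lt_floor_add_one _
      have h3 : 0 ≤ |x| / s := by positivity
      calc x^2 / n = (|x|/s)^2 := by
            rw [div_pow, sq_abs, show s^2 = (n:ℝ) by rw [pow_two, hss]]
        _ ≤ ((j₀:ℝ)+1)^2 := by nlinarith
    calc θ' * x^2 / n ≤ θ * (x^2/n) := by
          rw [mul_div_assoc]
          exact mul_le_mul_of_nonneg_right h1 (by positivity)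
      _ ≤ θ * ((j₀:ℝ)+1)^2 := mul_le_mul_of_nonneg_left hx2 hθ
  calc Real.exp (θ' * x^2 / n)
      ≤ Real.exp (θ*((j₀:ℝ)+1)^2) * (if (j₀:ℝ) * s ≤ |x| then (1:ℝ) else 0) := hterm
    _ ≤ _ := Finset.single_le_sum
        (f := fun j : ℕ => Real.exp (θ*((j:ℝ)+1)^2) * (if (j:ℝ) * s ≤ |x| then (1:ℝ) else 0))
        (fun j _ => mul_nonneg (Real.exp_pos _).le (ite_nonneg' _)) hmem

lemma tail2 (n : ℕ) (hn : 1 ≤ n) (ν : ℝ) (hν : 1 < ν) (ε : Fin n → ℝ)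
    (hε : ∀ i, ε i ^ 2 = 1) (hD : |∑ i, ε i| ≤ n * (ν - 1)) (j k : ℕ) :
    ∑ σ : Fin n → Bool,
      (if (j:ℝ) * Real.sqrt n ≤ |∑ i, ε i * spin (σ i)| then (1:ℝ) else 0)
        * (if (k:ℝ) * Real.sqrt n ≤ |∑ i, spin (σ i)| then (1:ℝ) else 0)
    ≤ 2 ^ n * (4 * Real.exp (-((j:ℝ)^2 + (k:ℝ)^2) / (2*ν))) := by
  have hν0 : (0:ℝ) < ν := by linarith
  have hn0 : (0:ℝ) < n := by exact_mod_cast hn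
  set s := Real.sqrt n with hsdef
  have hs0 : 0 < s := Real.sqrt_pos.mpr hn0
  have hs2' : s^2 = (n:ℝ) := Real.sq_sqrt hn0.le
  set t : ℝ := j / (ν * s) with htdef
  set u : ℝ := k / (ν * s) with hudef
  have ht : 0 ≤ t := by positivity
  have hu : 0 ≤ u := by positivity
  have e1 : t*((j:ℝ)*s) = (j:ℝ)^2 / ν := by
    rw [htdef]; rw [div_mul_eq_mul_div, div_eq_div_iff (by positivity) hν0.ne']; ring
  have e2 : u*((k:ℝ)*s) = (k:ℝ)^2 / ν := by
    rw [hudef]; rw [div_mul_eq_mul_div, div_eq_div_iff (by positivity) hν0.ne']; ring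
  have hss : s * s = (n:ℝ) := by rw [hsdef]; exact Real.mul_self_sqrt hn0.le
  have e3 : (n:ℝ)*(t^2+u^2)/2 = ((j:ℝ)^2+(k:ℝ)^2)/(2*ν^2) := by
    rw [htdef, hudef, div_pow, div_pow, mul_pow, hs2']
    field_simp
  have e4 : t*u*((n:ℝ)*(ν-1)) = (j:ℝ)*(k:ℝ)*(ν-1)/ν^2 := by
    rw [htdef, hudef, div_mul_div_comm]
    rw [div_mul_eq_mul_div, div_eq_div_iff (by positivity) (by positivity : (ν^2:ℝ) ≠ 0)]
    linear_combination (-((j:ℝ)*(k:ℝ)*(ν-1)*ν^2)) * hss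
  have key : - (t*((j:ℝ)*s)) - u*((k:ℝ)*s) + n*(t^2+u^2)/2 + t*u*((n:ℝ)*(ν-1))
      ≤ -((j:ℝ)^2 + (k:ℝ)^2) / (2*ν) := by
    rw [e1, e2, e3, e4]
    have hdiff : -((j:ℝ)^2/ν) - (k:ℝ)^2/ν + ((j:ℝ)^2+(k:ℝ)^2)/(2*ν^2)
        + (j:ℝ)*(k:ℝ)*(ν-1)/ν^2 - (-((j:ℝ)^2 + (k:ℝ)^2) / (2*ν))
        = -(((ν-1) * ((j:ℝ)-(k:ℝ))^2)/(2*ν^2)) := by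
      field_simp
      ring
    have hpos : 0 ≤ ((ν-1) * ((j:ℝ)-(k:ℝ))^2)/(2*ν^2) := by
      apply div_nonneg (mul_nonneg (by linarith) (sq_nonneg _)) (by positivity)
    linarith [hdiff, hpos]
  -- four-combo bound
  have combo : ∀ s₁ s₂ : ℝ, (s₁ = 1 ∨ s₁ = -1) → (s₂ = 1 ∨ s₂ = -1) →
      ∑ σ : Fin n → Bool,
        (if (j:ℝ)*s ≤ s₁ * ∑ i, ε i * spin (σ i) ∧ (k:ℝ)*s ≤ s₂ * ∑ i, spin (σ i)
          then (1:ℝ) else 0)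
      ≤ 2 ^ n * Real.exp (-((j:ℝ)^2 + (k:ℝ)^2) / (2*ν)) := by
    intro s₁ s₂ hs₁ hs₂
    have hs₁' : s₁^2 = 1 := by rcases hs₁ with h|h <;> rw [h] <;> norm_num
    have hs₂' : s₂^2 = 1 := by rcases hs₂ with h|h <;> rw [h] <;> norm_num
    have habs1 : |s₁| = 1 := by rcases hs₁ with h|h <;> rw [h] <;> norm_num
    have habs2 : |s₂| = 1 := by rcases hs₂ with h|h <;> rw [h] <;> norm_num
    have hprod : s₁ * s₂ * ∑ i, ε i ≤ (n:ℝ)*(ν-1) := by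
      calc s₁ * s₂ * ∑ i, ε i ≤ |s₁ * s₂ * ∑ i, ε i| := le_abs_self _
        _ = |∑ i, ε i| := by rw [abs_mul, abs_mul, habs1, habs2, one_mul, one_mul]
        _ ≤ (n:ℝ)*(ν-1) := hD
    calc _ ≤ 2 ^ n * Real.exp (- (t*((j:ℝ)*s)) - u*((k:ℝ)*s) + n*(t^2+u^2)/2
            + t*u*((n:ℝ)*(ν-1))) :=
          chernoff2 n ε hε t u ((j:ℝ)*s) ((k:ℝ)*s) ((n:ℝ)*(ν-1)) ht hu s₁ s₂ hs₁' hs₂' hprod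
      _ ≤ _ := by
          apply mul_le_mul_of_nonneg_left (Real.exp_le_exp.mpr key) (by positivity)
  calc ∑ σ : Fin n → Bool,
      (if (j:ℝ) * s ≤ |∑ i, ε i * spin (σ i)| then (1:ℝ) else 0)
        * (if (k:ℝ) * s ≤ |∑ i, spin (σ i)| then (1:ℝ) else 0)
      ≤ ∑ σ : Fin n → Bool,
        ((if (j:ℝ)*s ≤ 1 * ∑ i, ε i * spin (σ i) ∧ (k:ℝ)*s ≤ 1 * ∑ i, spin (σ i) then (1:ℝ) else 0)
         + (if (j:ℝ)*s ≤ 1 * ∑ i, ε i * spin (σ i) ∧ (k:ℝ)*s ≤ (-1) * ∑ i, spin (σ i) then (1:ℝ) else 0)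
         + (if (j:ℝ)*s ≤ (-1) * ∑ i, ε i * spin (σ i) ∧ (k:ℝ)*s ≤ 1 * ∑ i, spin (σ i) then (1:ℝ) else 0)
         + (if (j:ℝ)*s ≤ (-1) * ∑ i, ε i * spin (σ i) ∧ (k:ℝ)*s ≤ (-1) * ∑ i, spin (σ i) then (1:ℝ) else 0)) :=
        Finset.sum_le_sum fun σ _ => ind_prod_le _ _ _ _
    _ = (∑ σ : Fin n → Bool, (if (j:ℝ)*s ≤ 1 * ∑ i, ε i * spin (σ i) ∧ (k:ℝ)*s ≤ 1 * ∑ i, spin (σ i) then (1:ℝ) else 0))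
        + (∑ σ : Fin n → Bool, (if (j:ℝ)*s ≤ 1 * ∑ i, ε i * spin (σ i) ∧ (k:ℝ)*s ≤ (-1) * ∑ i, spin (σ i) then (1:ℝ) else 0))
        + (∑ σ : Fin n → Bool, (if (j:ℝ)*s ≤ (-1) * ∑ i, ε i * spin (σ i) ∧ (k:ℝ)*s ≤ 1 * ∑ i, spin (σ i) then (1:ℝ) else 0))
        + (∑ σ : Fin n → Bool, (if (j:ℝ)*s ≤ (-1) * ∑ i, ε i * spin (σ i) ∧ (k:ℝ)*s ≤ (-1) * ∑ i, spin (σ i) then (1:ℝ) else 0)) := by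
        simp [Finset.sum_add_distrib]
    _ ≤ 2 ^ n * Real.exp (-((j:ℝ)^2 + (k:ℝ)^2) / (2*ν)) + 2 ^ n * Real.exp (-((j:ℝ)^2 + (k:ℝ)^2) / (2*ν))
        + 2 ^ n * Real.exp (-((j:ℝ)^2 + (k:ℝ)^2) / (2*ν)) + 2 ^ n * Real.exp (-((j:ℝ)^2 + (k:ℝ)^2) / (2*ν)) := by
        gcongr <;>
          [exact combo 1 1 (Or.inl rfl) (Or.inl rfl);
           exact combo 1 (-1) (Or.inl rfl) (Or.inr rfl);
           exact combo (-1) 1 (Or.inr rfl) (Or.inl rfl);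
           exact combo (-1) (-1) (Or.inr rfl) (Or.inr rfl)]
    _ = 2 ^ n * (4 * Real.exp (-((j:ℝ)^2 + (k:ℝ)^2) / (2*ν))) := by ring

lemma series_bound_explicit (θ ν : ℝ) (hθ1 : 1/4 < θ) (hθ2 : θ < 1/2) (hν : ν = (2*θ+1)/(4*θ)) (m : ℕ) :
    ∑ j ∈ Finset.range m, Real.exp (θ*((j:ℝ)+1)^2 - (j:ℝ)^2/(2*ν))
      ≤ Real.exp ((9/(4*(1/2-θ)) + 1)/(2*ν)) * (1 - Real.exp (-(1/(2*ν))))⁻¹ := by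
  have hθ0 : 0 < θ := by linarith
  have hν0 : 0 < ν := by rw [hν]; positivity
  have hνθ : 2*ν*θ = θ + 1/2 := by rw [hν]; field_simp; ring
  set a : ℝ := 1/2 - θ with ha
  have ha0 : 0 < a := by rw [ha]; linarith
  set C₀ : ℝ := 9/(4*a) + 1 with hC₀
  set r : ℝ := Real.exp (-(1/(2*ν))) with hr
  have hr0 : 0 < r := Real.exp_pos _
  have hr1 : r < 1 := by
    rw [hr, Real.exp_lt_one_iff]
    have : 0 < 1/(2*ν) := by positivity
    linarith
  have hterm : ∀ j : ℕ, Real.exp (θ*((j:ℝ)+1)^2 - (j:ℝ)^2/(2*ν))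
      ≤ Real.exp (C₀/(2*ν)) * r ^ j := by
    intro j
    have hkey : 2*ν*(θ*((j:ℝ)+1)^2) - (j:ℝ)^2 ≤ C₀ - j := by
      rw [hC₀]
      have h1 : 2*ν*(θ*((j:ℝ)+1)^2) = (1-a)*((j:ℝ)+1)^2 := by
        rw [show (1:ℝ)-a = θ+1/2 by rw [ha]; ring, ← hνθ]; ring
      rw [h1]
      have h2 : 0 ≤ (a*(j:ℝ) - 3/2)^2 := sq_nonneg _
      have hj0 : (0:ℝ) ≤ (j:ℝ) := Nat.cast_nonneg j
      have hsuff : a * ((1-a)*((j:ℝ)+1)^2 - (j:ℝ)^2 - (9/(4*a)) - 1 + (j:ℝ))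
          = -(a*(j:ℝ) - 3/2)^2 - 2*a^2*(j:ℝ) - a^2 := by
        field_simp; ring
      have hle : a * ((1-a)*((j:ℝ)+1)^2 - (j:ℝ)^2 - (9/(4*a)) - 1 + (j:ℝ)) ≤ a * 0 := by
        rw [hsuff, mul_zero]
        have := mul_nonneg (mul_nonneg (by norm_num : (0:ℝ) ≤ 2) (sq_nonneg a)) hj0
        nlinarith [h2, sq_nonneg a]
      have := le_of_mul_le_mul_left hle ha0
      linarith
    have hexp : θ*((j:ℝ)+1)^2 - (j:ℝ)^2/(2*ν) ≤ C₀/(2*ν) + (j:ℝ)*(-(1/(2*ν))) := by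
      have h2ν : (0:ℝ) < 2*ν := by positivity
      have hgoal : C₀/(2*ν) + (j:ℝ)*(-(1/(2*ν))) = (C₀ - j)/(2*ν) := by field_simp; ring
      rw [hgoal, ← sub_nonneg]
      have : (C₀ - (j:ℝ))/(2*ν) - (θ*((j:ℝ)+1)^2 - (j:ℝ)^2/(2*ν))
          = ((C₀ - j) - (2*ν*(θ*((j:ℝ)+1)^2) - (j:ℝ)^2))/(2*ν) := by
        field_simp
      rw [this]
      apply div_nonneg _ h2ν.le
      linarith
    calc Real.exp (θ*((j:ℝ)+1)^2 - (j:ℝ)^2/(2*ν)) ≤ Real.exp (C₀/(2*ν) + (j:ℝ)*(-(1/(2*ν)))) :=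
          Real.exp_le_exp.mpr hexp
      _ = Real.exp (C₀/(2*ν)) * r ^ j := by
          rw [Real.exp_add, hr, ← Real.exp_nat_mul]
  calc ∑ j ∈ Finset.range m, Real.exp (θ*((j:ℝ)+1)^2 - (j:ℝ)^2/(2*ν))
      ≤ ∑ j ∈ Finset.range m, Real.exp (C₀/(2*ν)) * r ^ j :=
        Finset.sum_le_sum fun j _ => hterm j
    _ = Real.exp (C₀/(2*ν)) * ∑ j ∈ Finset.range m, r ^ j := by rw [Finset.mul_sum]
    _ ≤ Real.exp (C₀/(2*ν)) * (1 - r)⁻¹ := by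
        apply mul_le_mul_of_nonneg_left _ (Real.exp_pos _).le
        rw [geom_sum_eq hr1.ne m, div_le_iff_of_neg (by linarith : r - 1 < 0)]
        have h1r : (1:ℝ) - r ≠ 0 := by linarith
        have : (1 - r)⁻¹ * (r - 1) = -1 := by
          rw [show r - 1 = -(1-r) by ring, mul_neg, inv_mul_cancel₀ h1r]
        rw [this]
        have : 0 ≤ r ^ m := by positivity
        linarith
    _ = Real.exp ((9/(4*(1/2-θ)) + 1)/(2*ν)) * (1 - r)⁻¹ := by rw [hC₀, ha]

/-- The constant in the geometric series bound. -/
def Kc (θ ν : ℝ) : ℝ :=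
  Real.exp ((9/(4*(1/2-θ)) + 1)/(2*ν)) * (1 - Real.exp (-(1/(2*ν))))⁻¹


lemma series_bound (θ ν : ℝ) (hθ1 : 1/4 < θ) (hθ2 : θ < 1/2) (hν : ν = (2*θ+1)/(4*θ)) (m : ℕ) :
    ∑ j ∈ Finset.range m, Real.exp (θ*((j:ℝ)+1)^2 - (j:ℝ)^2/(2*ν)) ≤ Kc θ ν :=
  series_bound_explicit θ ν hθ1 hθ2 hν m

lemma abs_sum_spin_le (n : ℕ) (ε : Fin n → ℝ) (hε : ∀ i, |ε i| = 1) (σ : Fin n → Bool) :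
    |∑ i, ε i * spin (σ i)| ≤ n := by
  calc |∑ i, ε i * spin (σ i)| ≤ ∑ i, |ε i * spin (σ i)| := Finset.abs_sum_le_sum_abs _ _
    _ = ∑ i : Fin n, (1:ℝ) := by
        apply Finset.sum_congr rfl
        intro i _
        rw [abs_mul, hε i, one_mul]
        cases σ i <;> norm_num [spin]
    _ = n := by simp

lemma abs_sum_spin_le' (n : ℕ) (σ : Fin n → Bool) : |∑ i, spin (σ i)| ≤ n := by
  have := abs_sum_spin_le n (fun _ => 1) (fun _ => abs_one) σ
  simpa using this

lemma inner_bound (n : ℕ) (hn : 1 ≤ n) (θ θ₁ θ₂ ν : ℝ)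
    (hθ1 : 1/4 < θ) (hθ2 : θ < 1/2) (hν : ν = (2*θ+1)/(4*θ))
    (h₁0 : 0 ≤ θ₁) (h₁ : θ₁ ≤ θ) (h₂0 : 0 ≤ θ₂) (h₂ : θ₂ ≤ θ)
    (ε : Fin n → ℝ) (hε : ∀ i, ε i ^ 2 = 1) (hD : |∑ i, ε i| ≤ n * (ν - 1)) :
    ∑ σ' : Fin n → Bool,
      Real.exp (θ₁ * (∑ i, ε i * spin (σ' i))^2 / n)
        * Real.exp (θ₂ * (∑ i, spin (σ' i))^2 / n)
      ≤ 2 ^ n * (4 * Kc θ ν ^ 2) := by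
  have hθ0 : 0 < θ := by linarith
  have hν1 : 1 < ν := by
    rw [hν, lt_div_iff₀ (by positivity)]
    linarith
  have hεabs : ∀ i, |ε i| = 1 := by
    intro i
    have h1 : |ε i|^2 = 1 := by rw [sq_abs]; exact hε i
    have h2 : 0 ≤ |ε i| := abs_nonneg _
    have h3 : (|ε i| - 1) * (|ε i| + 1) = 0 := by linear_combination h1
    rcases mul_eq_zero.mp h3 with h|h
    · linarith
    · linarith
  set E : ℕ → ℝ := fun j => Real.exp (θ*((j:ℝ)+1)^2) with hE
  set A : ℕ → ℝ := fun j => Real.exp (θ*((j:ℝ)+1)^2 - (j:ℝ)^2/(2*ν)) with hA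
  have hKA : ∑ j ∈ Finset.range (n+1), A j ≤ Kc θ ν := series_bound θ ν hθ1 hθ2 hν (n+1)
  have hA0 : (0:ℝ) ≤ ∑ j ∈ Finset.range (n+1), A j :=
    Finset.sum_nonneg fun j _ => (Real.exp_pos _).le
  have hK0 : 0 ≤ Kc θ ν := le_trans hA0 hKA
  calc ∑ σ' : Fin n → Bool,
      Real.exp (θ₁ * (∑ i, ε i * spin (σ' i))^2 / n)
        * Real.exp (θ₂ * (∑ i, spin (σ' i))^2 / n)
      ≤ ∑ σ' : Fin n → Bool, ∑ j ∈ Finset.range (n+1), ∑ k ∈ Finset.range (n+1),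
          (E j * (if (j:ℝ) * Real.sqrt n ≤ |∑ i, ε i * spin (σ' i)| then (1:ℝ) else 0))
            * (E k * (if (k:ℝ) * Real.sqrt n ≤ |∑ i, spin (σ' i)| then (1:ℝ) else 0)) := by
        apply Finset.sum_le_sum
        intro σ' _
        have p1 := peel n hn (∑ i, ε i * spin (σ' i)) (abs_sum_spin_le n ε hεabs σ') θ₁ θ h₁0 h₁
        have p2 := peel n hn (∑ i, spin (σ' i)) (abs_sum_spin_le' n σ') θ₂ θ h₂0 h₂
        calc Real.exp (θ₁ * (∑ i, ε i * spin (σ' i))^2 / n)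
              * Real.exp (θ₂ * (∑ i, spin (σ' i))^2 / n)
            ≤ (∑ j ∈ Finset.range (n+1),
                E j * (if (j:ℝ) * Real.sqrt n ≤ |∑ i, ε i * spin (σ' i)| then (1:ℝ) else 0))
              * (∑ k ∈ Finset.range (n+1),
                E k * (if (k:ℝ) * Real.sqrt n ≤ |∑ i, spin (σ' i)| then (1:ℝ) else 0)) := by
              apply mul_le_mul p1 p2 (Real.exp_pos _).le
              exact Finset.sum_nonneg fun j _ =>
                mul_nonneg (Real.exp_pos _).le (ite_nonneg' _)
          _ = _ := Finset.sum_mul_sum _ _ _ _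
    _ = ∑ j ∈ Finset.range (n+1), ∑ k ∈ Finset.range (n+1), ∑ σ' : Fin n → Bool,
          (E j * (if (j:ℝ) * Real.sqrt n ≤ |∑ i, ε i * spin (σ' i)| then (1:ℝ) else 0))
            * (E k * (if (k:ℝ) * Real.sqrt n ≤ |∑ i, spin (σ' i)| then (1:ℝ) else 0)) := by
        rw [Finset.sum_comm]
        exact Finset.sum_congr rfl fun j _ => Finset.sum_comm
    _ ≤ ∑ j ∈ Finset.range (n+1), ∑ k ∈ Finset.range (n+1),
          E j * E k * (2 ^ n * (4 * Real.exp (-((j:ℝ)^2 + (k:ℝ)^2) / (2*ν)))) := by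
        apply Finset.sum_le_sum; intro j _
        apply Finset.sum_le_sum; intro k _
        have hre : ∑ σ' : Fin n → Bool,
            (E j * (if (j:ℝ) * Real.sqrt n ≤ |∑ i, ε i * spin (σ' i)| then (1:ℝ) else 0))
              * (E k * (if (k:ℝ) * Real.sqrt n ≤ |∑ i, spin (σ' i)| then (1:ℝ) else 0))
            = E j * E k * ∑ σ' : Fin n → Bool,
                (if (j:ℝ) * Real.sqrt n ≤ |∑ i, ε i * spin (σ' i)| then (1:ℝ) else 0)
                  * (if (k:ℝ) * Real.sqrt n ≤ |∑ i, spin (σ' i)| then (1:ℝ) else 0) := by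
          rw [Finset.mul_sum]
          exact Finset.sum_congr rfl fun σ' _ => by ring
        rw [hre]
        exact mul_le_mul_of_nonneg_left (tail2 n hn ν hν1 ε hε hD j k)
          (mul_nonneg (Real.exp_pos _).le (Real.exp_pos _).le)
    _ = 2 ^ n * 4 * ((∑ j ∈ Finset.range (n+1), A j) * (∑ k ∈ Finset.range (n+1), A k)) := by
        rw [Finset.sum_mul_sum, Finset.mul_sum]
        apply Finset.sum_congr rfl; intro j _
        rw [Finset.mul_sum]
        apply Finset.sum_congr rfl; intro k _
        have h1 : A j * A k
            = Real.exp (θ*((j:ℝ)+1)^2 + θ*((k:ℝ)+1)^2 - ((j:ℝ)^2+(k:ℝ)^2)/(2*ν)) := by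
          rw [hA, ← Real.exp_add]; congr 1; ring
        have h2 : E j * E k * Real.exp (-((j:ℝ)^2+(k:ℝ)^2) / (2*ν))
            = Real.exp (θ*((j:ℝ)+1)^2 + θ*((k:ℝ)+1)^2 - ((j:ℝ)^2+(k:ℝ)^2)/(2*ν)) := by
          rw [hE, ← Real.exp_add, ← Real.exp_add]; congr 1; ring
        calc E j * E k * (2 ^ n * (4 * Real.exp (-((j:ℝ)^2 + (k:ℝ)^2) / (2*ν))))
            = 2 ^ n * 4 * (E j * E k * Real.exp (-((j:ℝ)^2 + (k:ℝ)^2) / (2*ν))) := by ring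
          _ = 2 ^ n * 4 * (A j * A k) := by rw [h2, ← h1]
    _ ≤ 2 ^ n * 4 * (Kc θ ν * Kc θ ν) := by
        apply mul_le_mul_of_nonneg_left (mul_le_mul hKA hKA hA0 hK0) (by positivity)
    _ = 2 ^ n * (4 * Kc θ ν ^ 2) := by ring

/-- The 1D average bound: `2^{-n} Σ_σ exp(θ₂ S²/n) ≤ 2 Kc`. -/
lemma outer_bound (n : ℕ) (hn : 1 ≤ n) (θ θ₂ ν : ℝ)
    (hθ1 : 1/4 < θ) (hθ2 : θ < 1/2) (hν : ν = (2*θ+1)/(4*θ))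
    (h₂0 : 0 ≤ θ₂) (h₂ : θ₂ ≤ θ) :
    ∑ σ : Fin n → Bool, Real.exp (θ₂ * (∑ i, spin (σ i))^2 / n)
      ≤ 2 ^ n * (2 * Kc θ ν) := by
  have hθ0 : 0 < θ := by linarith
  have hν1 : 1 ≤ ν := by
    rw [hν, le_div_iff₀ (by positivity)]
    linarith
  have hKA := series_bound θ ν hθ1 hθ2 hν (n+1)
  calc ∑ σ : Fin n → Bool, Real.exp (θ₂ * (∑ i, spin (σ i))^2 / n)
      ≤ ∑ σ : Fin n → Bool, ∑ k ∈ Finset.range (n+1),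
          Real.exp (θ*((k:ℝ)+1)^2)
            * (if (k:ℝ) * Real.sqrt n ≤ |∑ i, spin (σ i)| then (1:ℝ) else 0) :=
        Finset.sum_le_sum fun σ _ =>
          peel n hn (∑ i, spin (σ i)) (abs_sum_spin_le' n σ) θ₂ θ h₂0 h₂
    _ = ∑ k ∈ Finset.range (n+1), Real.exp (θ*((k:ℝ)+1)^2)
          * ∑ σ : Fin n → Bool,
              (if (k:ℝ) * Real.sqrt n ≤ |∑ i, spin (σ i)| then (1:ℝ) else 0) := by
        rw [Finset.sum_comm]
        exact Finset.sum_congr rfl fun k _ => (Finset.mul_sum _ _ _).symm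
    _ ≤ ∑ k ∈ Finset.range (n+1), Real.exp (θ*((k:ℝ)+1)^2)
          * (2 ^ n * (2 * Real.exp (-(k:ℝ)^2/2))) := by
        apply Finset.sum_le_sum; intro k _
        exact mul_le_mul_of_nonneg_left (tail1 n hn k) (Real.exp_pos _).le
    _ ≤ 2 ^ n * 2 * ∑ k ∈ Finset.range (n+1), Real.exp (θ*((k:ℝ)+1)^2 - (k:ℝ)^2/(2*ν)) := by
        rw [Finset.mul_sum]
        apply Finset.sum_le_sum; intro k _
        have harg : -(k:ℝ)^2/2 ≤ -(k:ℝ)^2/(2*ν) := by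
          rw [div_le_div_iff₀ (by norm_num) (by positivity)]
          nlinarith [sq_nonneg (k:ℝ)]
        calc Real.exp (θ*((k:ℝ)+1)^2) * (2 ^ n * (2 * Real.exp (-(k:ℝ)^2/2)))
            = 2 ^ n * 2 * (Real.exp (θ*((k:ℝ)+1)^2) * Real.exp (-(k:ℝ)^2/2)) := by ring
          _ ≤ 2 ^ n * 2 * (Real.exp (θ*((k:ℝ)+1)^2) * Real.exp (-(k:ℝ)^2/(2*ν))) := by
              apply mul_le_mul_of_nonneg_left _ (by positivity)
              exact mul_le_mul_of_nonneg_left (Real.exp_le_exp.mpr harg) (Real.exp_pos _).le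
          _ = 2 ^ n * 2 * Real.exp (θ*((k:ℝ)+1)^2 - (k:ℝ)^2/(2*ν)) := by
              rw [← Real.exp_add]; congr 1; ring
    _ ≤ 2 ^ n * 2 * Kc θ ν := by
        apply mul_le_mul_of_nonneg_left hKA (by positivity)
    _ = 2 ^ n * (2 * Kc θ ν) := by ring

lemma core (n : ℕ) (hn : 1 ≤ n) (θ θ₁ θ₂ ν δn : ℝ)
    (hθ1 : 1/4 < θ) (hθ2 : θ < 1/2) (hν : ν = (2*θ+1)/(4*θ))
    (h₁0 : 0 ≤ θ₁) (h₁ : θ₁ ≤ θ) (h₂0 : 0 ≤ θ₂) (h₂ : θ₂ ≤ θ)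
    (hδ : (n:ℝ) * δn ≤ n * (ν - 1)) :
    ((2:ℝ) ^ n)⁻¹ * ((2:ℝ) ^ n)⁻¹ *
        (∑ σ : Fin n → Bool, ∑ σ' : Fin n → Bool,
          if |∑ i : Fin n, spin (σ i)| ≤ n * δn ∧ |∑ i : Fin n, spin (σ' i)| ≤ n * δn
          then Real.exp (θ₁ * (∑ i : Fin n, spin (σ i) * spin (σ' i))^2 / n
            + θ₂ * (∑ i : Fin n, spin (σ i))^2 / n + θ₂ * (∑ i : Fin n, spin (σ' i))^2 / n)
          else 0)
      ≤ 8 * Kc θ ν ^ 3 := by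
  have hθ0 : 0 < θ := by linarith
  have hA0 : (0:ℝ) ≤ ∑ j ∈ Finset.range 1, Real.exp (θ*((j:ℝ)+1)^2 - (j:ℝ)^2/(2*ν)) :=
    Finset.sum_nonneg fun j _ => (Real.exp_pos _).le
  have hK0 : 0 ≤ Kc θ ν := le_trans hA0 (series_bound θ ν hθ1 hθ2 hν 1)
  have h2n : (0:ℝ) < 2 ^ n := by positivity
  -- step 1: pointwise bound
  have step1 : ∀ σ : Fin n → Bool,
      (∑ σ' : Fin n → Bool,
        if |∑ i : Fin n, spin (σ i)| ≤ n * δn ∧ |∑ i : Fin n, spin (σ' i)| ≤ n * δn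
        then Real.exp (θ₁ * (∑ i : Fin n, spin (σ i) * spin (σ' i))^2 / n
          + θ₂ * (∑ i : Fin n, spin (σ i))^2 / n + θ₂ * (∑ i : Fin n, spin (σ' i))^2 / n)
        else 0)
      ≤ Real.exp (θ₂ * (∑ i : Fin n, spin (σ i))^2 / n) * (2 ^ n * (4 * Kc θ ν ^ 2)) := by
    intro σ
    by_cases hσ : |∑ i : Fin n, spin (σ i)| ≤ n * δn
    · have hD : |∑ i : Fin n, spin (σ i)| ≤ n * (ν - 1) := le_trans hσ hδ
      have hib := inner_bound n hn θ θ₁ θ₂ ν hθ1 hθ2 hν h₁0 h₁ h₂0 h₂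
        (fun i => spin (σ i)) (fun i => spin_sq (σ i)) hD
      calc (∑ σ' : Fin n → Bool,
          if |∑ i : Fin n, spin (σ i)| ≤ n * δn ∧ |∑ i : Fin n, spin (σ' i)| ≤ n * δn
          then Real.exp (θ₁ * (∑ i : Fin n, spin (σ i) * spin (σ' i))^2 / n
            + θ₂ * (∑ i : Fin n, spin (σ i))^2 / n + θ₂ * (∑ i : Fin n, spin (σ' i))^2 / n)
          else 0)
          ≤ ∑ σ' : Fin n → Bool, Real.exp (θ₂ * (∑ i : Fin n, spin (σ i))^2 / n)
              * (Real.exp (θ₁ * (∑ i : Fin n, spin (σ i) * spin (σ' i))^2 / n)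
                * Real.exp (θ₂ * (∑ i : Fin n, spin (σ' i))^2 / n)) := by
            apply Finset.sum_le_sum; intro σ' _
            split_ifs with h
            · rw [← Real.exp_add, ← Real.exp_add]
              apply le_of_eq; congr 1; ring
            · positivity
        _ = Real.exp (θ₂ * (∑ i : Fin n, spin (σ i))^2 / n)
              * ∑ σ' : Fin n → Bool,
                Real.exp (θ₁ * (∑ i : Fin n, spin (σ i) * spin (σ' i))^2 / n)
                  * Real.exp (θ₂ * (∑ i : Fin n, spin (σ' i))^2 / n) :=
            (Finset.mul_sum _ _ _).symm
        _ ≤ Real.exp (θ₂ * (∑ i : Fin n, spin (σ i))^2 / n) * (2 ^ n * (4 * Kc θ ν ^ 2)) := by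
            exact mul_le_mul_of_nonneg_left hib (Real.exp_pos _).le
    · have hz : (∑ σ' : Fin n → Bool,
          if |∑ i : Fin n, spin (σ i)| ≤ n * δn ∧ |∑ i : Fin n, spin (σ' i)| ≤ n * δn
          then Real.exp (θ₁ * (∑ i : Fin n, spin (σ i) * spin (σ' i))^2 / n
            + θ₂ * (∑ i : Fin n, spin (σ i))^2 / n + θ₂ * (∑ i : Fin n, spin (σ' i))^2 / n)
          else 0) = 0 := by
        apply Finset.sum_eq_zero; intro σ' _
        rw [if_neg (fun h => hσ h.1)]
      rw [hz]
      positivity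
  calc ((2:ℝ) ^ n)⁻¹ * ((2:ℝ) ^ n)⁻¹ *
        (∑ σ : Fin n → Bool, ∑ σ' : Fin n → Bool,
          if |∑ i : Fin n, spin (σ i)| ≤ n * δn ∧ |∑ i : Fin n, spin (σ' i)| ≤ n * δn
          then Real.exp (θ₁ * (∑ i : Fin n, spin (σ i) * spin (σ' i))^2 / n
            + θ₂ * (∑ i : Fin n, spin (σ i))^2 / n + θ₂ * (∑ i : Fin n, spin (σ' i))^2 / n)
          else 0)
      ≤ ((2:ℝ) ^ n)⁻¹ * ((2:ℝ) ^ n)⁻¹ *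
          (∑ σ : Fin n → Bool,
            Real.exp (θ₂ * (∑ i : Fin n, spin (σ i))^2 / n) * (2 ^ n * (4 * Kc θ ν ^ 2))) := by
        apply mul_le_mul_of_nonneg_left (Finset.sum_le_sum fun σ _ => step1 σ) (by positivity)
    _ = ((2:ℝ) ^ n)⁻¹ * ((2:ℝ) ^ n)⁻¹ * (2 ^ n * (4 * Kc θ ν ^ 2))
          * ∑ σ : Fin n → Bool, Real.exp (θ₂ * (∑ i : Fin n, spin (σ i))^2 / n) := by
        rw [← Finset.sum_mul]
        ring
    _ ≤ ((2:ℝ) ^ n)⁻¹ * ((2:ℝ) ^ n)⁻¹ * (2 ^ n * (4 * Kc θ ν ^ 2)) * (2 ^ n * (2 * Kc θ ν)) := by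
        apply mul_le_mul_of_nonneg_left (outer_bound n hn θ θ₂ ν hθ1 hθ2 hν h₂0 h₂)
        positivity
    _ = 8 * Kc θ ν ^ 3 := by
        field_simp
        ring

/-- **Uniform integrability bound for the truncated replica expectation.**
Let `σ, σ'` be independent uniform on `{−1,+1}^n`, `δ_n → 0` with `√n δ_n → ∞`, and
`Ω_n = {τ : |Σ_i τ_i| ≤ n δ_n}`. For `0 < β < 1/2`, `J ≥ 0`, `βJ < 1/2`, there exists
`η > 0` such that
`limsup_n E[1_{σ ∈ Ω_n} 1_{σ' ∈ Ω_n} exp{(1+η)((2β²/n)(Σ σ_i σ'_i)² + (βJ/n)(Σ σ_i)²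
  + (βJ/n)(Σ σ'_i)²)}] < ∞`. -/
theorem replica_expectation_bounded (β J : ℝ) (hβ0 : 0 < β) (hβ : β < 1 / 2)
    (hJ : 0 ≤ J) (hβJ : β * J < 1 / 2) (δ : ℕ → ℝ) (hδ : Tendsto δ atTop (𝓝 0))
    (hδ' : Tendsto (fun n : ℕ => Real.sqrt n * δ n) atTop atTop) :
    ∃ η > (0 : ℝ), ∃ M : ℝ, ∀ᶠ n : ℕ in atTop,
      ((2 : ℝ) ^ n)⁻¹ * ((2 : ℝ) ^ n)⁻¹ *
          (∑ σ : Fin n → Bool, ∑ σ' : Fin n → Bool,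
            if |∑ i : Fin n, spin (σ i)| ≤ n * δ n ∧ |∑ i : Fin n, spin (σ' i)| ≤ n * δ n
            then
              Real.exp
                ((1 + η) *
                  ((2 * β ^ 2 / n) * (∑ i : Fin n, spin (σ i) * spin (σ' i)) ^ 2
                    + (β * J / n) * (∑ i : Fin n, spin (σ i)) ^ 2
                    + (β * J / n) * (∑ i : Fin n, spin (σ' i)) ^ 2))
            else 0) ≤ M := by
  set ρ : ℝ := max (2*β^2) (β*J) with hρ
  have hρ1 : 2*β^2 ≤ ρ := le_max_left _ _
  have hρ2 : β*J ≤ ρ := le_max_right _ _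
  have hρ0 : 0 < ρ := lt_of_lt_of_le (by positivity) hρ1
  have hρh : ρ < 1/2 := max_lt (by nlinarith) hβJ
  set η : ℝ := (1/2 - ρ)/(2*ρ) with hη
  have hη0 : 0 < η := by apply div_pos <;> linarith
  refine ⟨η, hη0, 8 * Kc (ρ/2 + 1/4) ((2*(ρ/2+1/4)+1)/(4*(ρ/2+1/4))) ^ 3, ?_⟩
  set θ : ℝ := ρ/2 + 1/4 with hθ
  set ν : ℝ := (2*θ+1)/(4*θ) with hν
  clear_value ρ η θ ν
  have hθ1 : 1/4 < θ := by rw [hθ]; linarith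
  have hθ2 : θ < 1/2 := by rw [hθ]; linarith
  have hθ0 : 0 < θ := by linarith
  have hν1 : 1 < ν := by
    rw [hν, lt_div_iff₀ (by positivity)]
    linarith
  have hkey : (1+η)*ρ = θ := by
    rw [hη, hθ]
    field_simp
    ring
  have h1η : 0 ≤ 1 + η := by linarith
  have h₁0 : 0 ≤ (1+η)*(2*β^2) := by positivity
  have h₂0 : 0 ≤ (1+η)*(β*J) := by positivity
  have h₁ : (1+η)*(2*β^2) ≤ θ := by
    rw [← hkey]; exact mul_le_mul_of_nonneg_left hρ1 h1η
  have h₂ : (1+η)*(β*J) ≤ θ := by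
    rw [← hkey]; exact mul_le_mul_of_nonneg_left hρ2 h1η
  filter_upwards [eventually_ge_atTop 1, hδ.eventually (gt_mem_nhds (by linarith : (0:ℝ) < ν - 1))]
    with n hn hδn
  have hrw : (∑ σ : Fin n → Bool, ∑ σ' : Fin n → Bool,
      if |∑ i : Fin n, spin (σ i)| ≤ n * δ n ∧ |∑ i : Fin n, spin (σ' i)| ≤ n * δ n
      then
        Real.exp
          ((1 + η) *
            ((2 * β ^ 2 / n) * (∑ i : Fin n, spin (σ i) * spin (σ' i)) ^ 2
              + (β * J / n) * (∑ i : Fin n, spin (σ i)) ^ 2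
              + (β * J / n) * (∑ i : Fin n, spin (σ' i)) ^ 2))
      else 0)
      = (∑ σ : Fin n → Bool, ∑ σ' : Fin n → Bool,
      if |∑ i : Fin n, spin (σ i)| ≤ n * δ n ∧ |∑ i : Fin n, spin (σ' i)| ≤ n * δ n
      then Real.exp ((1+η)*(2*β^2) * (∑ i : Fin n, spin (σ i) * spin (σ' i))^2 / n
        + (1+η)*(β*J) * (∑ i : Fin n, spin (σ i))^2 / n
        + (1+η)*(β*J) * (∑ i : Fin n, spin (σ' i))^2 / n)
      else 0) := by
    apply Finset.sum_congr rfl; intro σ _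
    apply Finset.sum_congr rfl; intro σ' _
    congr 2
    ring
  rw [hrw]
  exact core n hn θ ((1+η)*(2*β^2)) ((1+η)*(β*J)) ν (δ n) hθ1 hθ2 hν h₁0 h₁ h₂0 h₂
    (mul_le_mul_of_nonneg_left hδn.le (Nat.cast_nonneg n))


end
end
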